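/- arXiv:2006.00706 — 2 statements merged into one kernel-verified Lean document; each statement's English description precedes it below -/
import Mathlib

section
/- Let S be a nonempty finite set, let B₁, ε > 0 be reals, let K and L be reals with K ≥ max(1, |S|) and L ≥ 1, let n : S → ℝ with n(i) > 0 for all i, and let δ : S → ℝ and Δ > 0 satisfy 0 < δ(i) ≤ Δ for all i ∈ S. Suppose Δ ≤ B₁·∑_{i∈S} (4√(L/n(i)) + 24·K·L³/(n(i)·ε)). Then Δ ≤ 2·B₁·∑_{i∈S, n(i) ≤ N(i)} (4√(L/n(i)) + 24·K·L³/(n(i)·ε)), where N(i) = max(256·B₁²·K²·L/δ(i)², 96·B₁·K²·L³/(ε·δ(i))) and the sum ranges only over those i ∈ S whose counter n(i) does not exceed N(i). -/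
/-! Once the counter `n i` of a base arm exceeds its threshold `N i`, each of the two terms of
its confidence width is below `δ i / (4 B₁ K) ≤ Δ / (4 B₁ K)`, so the at most `K` well-explored
arms contribute at most `Δ / 2` to `B₁ · ∑ widths`. The bad event `Δ ≤ B₁ · ∑ widths` then
leaves `Δ / 2` for the underexplored arms. -/

open Finset

noncomputable def confWidth (K L ε n : ℝ) : ℝ :=
  4 * √(L / n) + 24 * K * L ^ 3 / (n * ε)

noncomputable def counterThreshold (B K L ε δ : ℝ) : ℝ :=
  max (256 * B ^ 2 * K ^ 2 * L / δ ^ 2) (96 * B * K ^ 2 * L ^ 3 / (ε * δ))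

section ConfidenceWidth

variable {B K L ε δ n : ℝ}

lemma four_mul_sqrt_div_le (hB : 0 < B) (hK : 0 < K) (hδ : 0 < δ) (hn : 0 < n)
    (hN : 256 * B ^ 2 * K ^ 2 * L / δ ^ 2 < n) :
    4 * √(L / n) ≤ δ / (4 * B * K) := by
  have hLn : L / n ≤ (δ / (16 * B * K)) ^ 2 := by
    rw [div_lt_iff₀ (by positivity)] at hN
    rw [div_le_iff₀ hn, div_pow, div_mul_eq_mul_div, le_div_iff₀ (by positivity)]
    linarith
  calc 4 * √(L / n) ≤ 4 * (δ / (16 * B * K)) := by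
        gcongr
        exact (Real.sqrt_le_left (by positivity)).mpr hLn
    _ = δ / (4 * B * K) := by field_simp; ring

lemma laplace_width_lt (hB : 0 < B) (hK : 0 < K) (hε : 0 < ε) (hδ : 0 < δ) (hn : 0 < n)
    (hN : 96 * B * K ^ 2 * L ^ 3 / (ε * δ) < n) :
    24 * K * L ^ 3 / (n * ε) < δ / (4 * B * K) := by
  rw [div_lt_iff₀ (by positivity)] at hN
  rw [div_lt_div_iff₀ (by positivity) (by positivity)]
  linarith

lemma confWidth_le_of_counterThreshold_lt (hB : 0 < B) (hK : 0 < K) (hε : 0 < ε)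
    (hδ : 0 < δ) (hn : 0 < n) (hN : counterThreshold B K L ε δ < n) :
    confWidth K L ε n ≤ δ / (2 * B * K) := by
  obtain ⟨hsqrt, hlaplace⟩ := max_lt_iff.mp hN
  calc confWidth K L ε n ≤ δ / (4 * B * K) + δ / (4 * B * K) :=
        add_le_add (four_mul_sqrt_div_le hB hK hδ hn hsqrt)
          (laplace_width_lt hB hK hε hδ hn hlaplace).le
    _ = δ / (2 * B * K) := by field_simp; ring

end ConfidenceWidth

lemma le_two_mul_sum_filter_of_le_mul_sum {α : Type*} {S : Finset α} (p : α → Prop)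
    [DecidablePred p] {w : α → ℝ} {B K Δ : ℝ} (hB : 0 < B) (hK : 0 < K) (hΔ : 0 ≤ Δ)
    (hcard : (#S : ℝ) ≤ K) (hsmall : ∀ i ∈ S, ¬ p i → w i ≤ Δ / (2 * B * K))
    (h : Δ ≤ B * ∑ i ∈ S, w i) :
    Δ ≤ 2 * B * ∑ i ∈ S with p i, w i := by
  have hrest : B * ∑ i ∈ S with ¬ p i, w i ≤ Δ / 2 :=
    calc B * ∑ i ∈ S with ¬ p i, w i ≤ B * (#{i ∈ S | ¬ p i} * (Δ / (2 * B * K))) := by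
          gcongr
          exact sum_le_card_nsmul _ _ _ (fun i hi => hsmall i (mem_filter.mp hi).1
            (mem_filter.mp hi).2) |>.trans_eq (nsmul_eq_mul _ _)
      _ ≤ B * (K * (Δ / (2 * B * K))) := by
          gcongr
          exact (Nat.cast_le.mpr (card_filter_le _ _)).trans hcard
      _ = Δ / 2 := by field_simp
  rw [← sum_filter_add_sum_filter_not S p, mul_add] at h
  linarith

theorem stmt2_general {α : Type*} (S : Finset α) (B₁ ε K L Δ : ℝ)
    (hB : 0 < B₁) (hε : 0 < ε) (hK : max 1 (S.card : ℝ) ≤ K)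
    (n δ : α → ℝ) (hn : ∀ i ∈ S, 0 < n i)
    (hδ : ∀ i ∈ S, 0 < δ i ∧ δ i ≤ Δ) (hΔ : 0 < Δ)
    (h : Δ ≤ B₁ * ∑ i ∈ S, (4 * Real.sqrt (L / n i) + 24 * K * L ^ 3 / (n i * ε))) :
    Δ ≤ 2 * B₁ * ∑ i ∈ S.filter (fun i =>
        n i ≤ max (256 * B₁ ^ 2 * K ^ 2 * L / (δ i) ^ 2)
          (96 * B₁ * K ^ 2 * L ^ 3 / (ε * δ i))),
      (4 * Real.sqrt (L / n i) + 24 * K * L ^ 3 / (n i * ε)) := by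
  have hK0 : 0 < K := one_pos.trans_le ((le_max_left _ _).trans hK)
  refine le_two_mul_sum_filter_of_le_mul_sum _ hB hK0 hΔ.le ((le_max_right _ _).trans hK)
    (fun i hi hexplored => ?_) h
  obtain ⟨hδpos, hδle⟩ := hδ i hi
  calc confWidth K L ε (n i) ≤ δ i / (2 * B₁ * K) :=
        confWidth_le_of_counterThreshold_lt hB hK0 hε hδpos (hn i hi) (not_le.mp hexplored)
    _ ≤ Δ / (2 * B₁ * K) := by gcongr

/-- Gap-doubling combined with the counter-threshold computation for the
ε-differentially private CUCB algorithm: when the 'bad event' occurs (the gap `Δ` of the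
played super arm `S` is bounded by `B₁` times the sum of confidence widths), the gap is
controlled by twice the sum of confidence widths over the underexplored base arms, i.e.
those whose counter `n i` does not exceed
`N i = max (256 B₁² K² L / (δ i)²) (96 B₁ K² L³ / (ε · δ i))`. -/
theorem stmt2 {α : Type*} (S : Finset α) (hS : S.Nonempty) (B₁ ε K L Δ : ℝ)
    (hB : 0 < B₁) (hε : 0 < ε) (hK : max 1 (S.card : ℝ) ≤ K) (hL : 1 ≤ L)
    (n δ : α → ℝ) (hn : ∀ i ∈ S, 0 < n i)
    (hδ : ∀ i ∈ S, 0 < δ i ∧ δ i ≤ Δ) (hΔ : 0 < Δ)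
    (h : Δ ≤ B₁ * ∑ i ∈ S, (4 * Real.sqrt (L / n i) + 24 * K * L ^ 3 / (n i * ε))) :
    Δ ≤ 2 * B₁ * ∑ i ∈ S.filter (fun i =>
        n i ≤ max (256 * B₁ ^ 2 * K ^ 2 * L / (δ i) ^ 2)
          (96 * B₁ * K ^ 2 * L ^ 3 / (ε * δ i))),
      (4 * Real.sqrt (L / n i) + 24 * K * L ^ 3 / (n i * ε)) :=
  stmt2_general S B₁ ε K L Δ hB hε hK n δ hn hδ hΔ h
end

section
/- Let T and m be natural numbers, let S : Fin T → Finset (Fin m) be a sequence of subsets (the super arms played in rounds 0,…,T−1), and for each round t and base arm i define the counter N(t,i) = |{s < t : i ∈ S(s)}|. Let f : Fin m → ℕ → ℝ be a nonnegative function, and suppose that for each i there is a natural number nᵢ such that f(i, n) = 0 whenever n ≥ nᵢ. Then ∑_{t=0}^{T−1} ∑_{i ∈ S(t)} f(i, N(t,i)) ≤ ∑_{i=0}^{m−1} ∑_{n=0}^{nᵢ−1} f(i, n). -/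
/-- Deterministic double-counting lemma for CUCB-style combinatorial semi-bandit algorithms:
`S t` is the super arm played in round `t`, the counter `N t i` is the number of earlier
rounds containing base arm `i`; each counter value is visited at most once per arm, and
terms with counters past the exploration threshold `nmax i` vanish. -/
theorem stmt4 (T m : ℕ) (S : Fin T → Finset (Fin m))
    (f : Fin m → ℕ → ℝ) (hf : ∀ i n, 0 ≤ f i n)
    (nmax : Fin m → ℕ) (hzero : ∀ i n, nmax i ≤ n → f i n = 0) :
    ∑ t : Fin T, ∑ i ∈ S t,
        f i ((Finset.univ.filter (fun s : Fin T => s < t ∧ i ∈ S s)).card) ≤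
      ∑ i : Fin m, ∑ n ∈ Finset.range (nmax i), f i n := by
  set N : Fin T → Fin m → ℕ :=
    fun t i => (Finset.univ.filter (fun s : Fin T => s < t ∧ i ∈ S s)).card with hN
  have hswap : ∑ t : Fin T, ∑ i ∈ S t, f i (N t i)
      = ∑ i : Fin m, ∑ t ∈ Finset.univ.filter (fun t => i ∈ S t), f i (N t i) := by
    apply Finset.sum_comm'
    intro x y; simp
  rw [hswap]
  apply Finset.sum_le_sum
  intro i _
  -- N is strictly monotone on rounds containing i, hence injective there
  have hmono : ∀ s t : Fin T, i ∈ S s → s < t → N s i < N t i := by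
    intro s t hs hst
    apply Finset.card_lt_card
    constructor
    · intro u hu
      simp only [Finset.mem_filter, Finset.mem_univ, true_and] at hu ⊢
      exact ⟨hu.1.trans hst, hu.2⟩
    · intro hsub
      have := hsub (Finset.mem_filter.mpr ⟨Finset.mem_univ s, hst, hs⟩)
      simp only [Finset.mem_filter] at this
      exact lt_irrefl s this.2.1
  have hinj : Set.InjOn (fun t => N t i) (Finset.univ.filter (fun t => i ∈ S t)) := by
    intro s hs t ht h
    simp only [Finset.coe_filter, Set.mem_setOf_eq] at hs ht
    rcases lt_trichotomy s t with h' | h' | h'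
    · exact absurd h (ne_of_lt (hmono s t hs.2 h'))
    · exact h'
    · exact absurd h.symm (ne_of_lt (hmono t s ht.2 h'))
  rw [← Finset.sum_image (f := fun n => f i n) (fun s hs t ht h => hinj hs ht h)]
  set A := (Finset.univ.filter (fun t => i ∈ S t)).image (fun t => N t i) with hA
  have h1 : ∑ n ∈ A, f i n = ∑ n ∈ A.filter (fun n => n < nmax i), f i n := by
    symm
    apply Finset.sum_subset (Finset.filter_subset _ _)
    intro n hn hn'
    apply hzero
    simp only [Finset.mem_filter, hn, true_and, not_lt] at hn'
    exact hn'
  rw [h1]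
  apply Finset.sum_le_sum_of_subset_of_nonneg
  · intro n hn
    simp only [Finset.mem_filter] at hn
    exact Finset.mem_range.mpr hn.2
  · intro n _ _
    exact hf i n
end
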